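/- Let M be a matroid on {x_1,...,x_n} and α ∈ ℕ^n with positive entries. Suppose (B_1, B_2) is obtained from a pair of bases (A_1, A_2) of M by a symmetric subset exchange, and let (A'_1, A'_2) and (B'_1, B'_2) be compatible pairs of bases of M^α with π(A'_i) = A_i and π(B'_i) = B_i. Then (B'_1, B'_2) is obtained from (A'_1, A'_2) by a symmetric subset exchange in M^α. -/

import Mathlib

open Finset

/-- A set family is the collection of bases of a matroid: nonempty antichain
satisfying the basis exchange property. -/
def IsMatroidBases {γ : Type*} [DecidableEq γ] (ℬ : Set (Finset γ)) : Prop :=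
  ℬ.Nonempty ∧
  (∀ B₁ ∈ ℬ, ∀ B₂ ∈ ℬ, B₁ ⊆ B₂ → B₁ = B₂) ∧
  (∀ B₁ ∈ ℬ, ∀ B₂ ∈ ℬ, ∀ x ∈ B₁ \ B₂, ∃ y ∈ B₂ \ B₁, insert y (B₁.erase x) ∈ ℬ)

/-- The expansion of a family of subsets of `Fin n` with respect to `α`:
a subset `S` of the expanded ground set `Σ i, Fin (α i)` belongs to the
expansion iff it contains at most one copy of each element and its projection
belongs to the family. -/
def expansion {n : ℕ} (α : Fin n → ℕ) (𝒜 : Set (Finset (Fin n))) :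
    Set (Finset (Σ i : Fin n, Fin (α i))) :=
  {S | S.image Sigma.fst ∈ 𝒜 ∧ S.card = (S.image Sigma.fst).card}

/-- `(B₁, B₂)` is obtained from `(A₁, A₂)` by a symmetric subset exchange in the
matroid with basis family `ℬ`. -/
def SymSubsetExch {γ : Type*} [DecidableEq γ] (ℬ : Set (Finset γ))
    (A₁ A₂ B₁ B₂ : Finset γ) : Prop :=
  ∃ U V : Finset γ, U ⊆ A₁ ∧ V ⊆ A₂ ∧
    B₁ = (A₁ \ U) ∪ V ∧ B₂ = (A₂ \ V) ∪ U ∧ B₁ ∈ ℬ ∧ B₂ ∈ ℬ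

/-!
An element common to both bases of the new pair was never moved, so `B₁ ∩ B₂ ⊆ A₁ ∩ A₂`
for every symmetric subset exchange. Conversely, for compatible pairs of bases this
inclusion already forces an exchange, namely `U = A₁ ∩ B₂`, `V = A₂ ∩ B₁`. The inclusion
lifts from `M` to `M^α`: if `x ∈ B'₁ ∩ B'₂`, then `π x ∈ A₁ = π(A'₁)`, say `π x = π a` with
`a ∈ A'₁ ⊆ B'₁ ∪ B'₂`, and since `π` is injective on each of `B'₁`, `B'₂`, `a = x`.
-/

section SymSubsetExch

variable {γ : Type*} [DecidableEq γ]

theorem SymSubsetExch.inter_subset_inter {ℬ : Set (Finset γ)} {A₁ A₂ B₁ B₂ : Finset γ}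
    (h : SymSubsetExch ℬ A₁ A₂ B₁ B₂) : B₁ ∩ B₂ ⊆ A₁ ∩ A₂ := by
  obtain ⟨U, V, hU, hV, rfl, rfl, -, -⟩ := h
  intro x hx
  simp only [mem_inter, mem_union, mem_sdiff] at hx ⊢
  obtain ⟨⟨hA₁, hxU⟩ | hxV, ⟨hA₂, hxV'⟩ | hxU'⟩ := hx
  · exact ⟨hA₁, hA₂⟩
  · exact absurd hxU' hxU
  · exact absurd hxV hxV'
  · exact ⟨hU hxU', hV hxV⟩

theorem eq_sdiff_inter_union_inter_of_union_eq {A₁ A₂ B₁ B₂ : Finset γ}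
    (hunion : A₁ ∪ A₂ = B₁ ∪ B₂) (hinter : B₁ ∩ B₂ ⊆ A₁ ∩ A₂) :
    B₁ = (A₁ \ (A₁ ∩ B₂)) ∪ (A₂ ∩ B₁) := by
  ext x
  have hmem := congrArg (x ∈ ·) hunion
  have hsub := @hinter x
  simp only [mem_union, mem_inter, eq_iff_iff] at hmem hsub
  simp only [mem_union, mem_sdiff, mem_inter]
  tauto

theorem symSubsetExch_of_union_eq_of_inter_subset {ℬ : Set (Finset γ)}
    {A₁ A₂ B₁ B₂ : Finset γ} (hB₁ : B₁ ∈ ℬ) (hB₂ : B₂ ∈ ℬ)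
    (hunion : A₁ ∪ A₂ = B₁ ∪ B₂) (hinter : B₁ ∩ B₂ ⊆ A₁ ∩ A₂) :
    SymSubsetExch ℬ A₁ A₂ B₁ B₂ :=
  ⟨A₁ ∩ B₂, A₂ ∩ B₁, inter_subset_left, inter_subset_left,
    eq_sdiff_inter_union_inter_of_union_eq hunion hinter,
    eq_sdiff_inter_union_inter_of_union_eq (by rw [union_comm, hunion, union_comm])
      (by rw [inter_comm, inter_comm A₂]; exact hinter),
    hB₁, hB₂⟩

end SymSubsetExch

section Lift

variable {γ ι : Type*} [DecidableEq γ] [DecidableEq ι] {f : γ → ι}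

theorem mem_of_apply_mem_image_of_injOn {A B₁ B₂ : Finset γ} (hA : A ⊆ B₁ ∪ B₂)
    (hf₁ : Set.InjOn f B₁) (hf₂ : Set.InjOn f B₂) {x : γ} (hx₁ : x ∈ B₁) (hx₂ : x ∈ B₂)
    (hfx : f x ∈ A.image f) : x ∈ A := by
  obtain ⟨a, ha, hax⟩ := mem_image.mp hfx
  rcases mem_union.mp (hA ha) with haB | haB
  · rwa [← hf₁ haB hx₁ hax]
  · rwa [← hf₂ haB hx₂ hax]

theorem inter_subset_inter_of_image_inter_subset {A₁ A₂ B₁ B₂ : Finset γ}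
    (hunion : A₁ ∪ A₂ = B₁ ∪ B₂) (hf₁ : Set.InjOn f B₁) (hf₂ : Set.InjOn f B₂)
    (himage : B₁.image f ∩ B₂.image f ⊆ A₁.image f ∩ A₂.image f) :
    B₁ ∩ B₂ ⊆ A₁ ∩ A₂ := by
  intro x hx
  obtain ⟨hx₁, hx₂⟩ := mem_inter.mp hx
  obtain ⟨hfA₁, hfA₂⟩ :=
    mem_inter.mp (himage (mem_inter_of_mem (mem_image_of_mem f hx₁) (mem_image_of_mem f hx₂)))
  exact mem_inter_of_mem
    (mem_of_apply_mem_image_of_injOn (hunion ▸ subset_union_left) hf₁ hf₂ hx₁ hx₂ hfA₁)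
    (mem_of_apply_mem_image_of_injOn (hunion ▸ subset_union_right) hf₁ hf₂ hx₁ hx₂ hfA₂)

end Lift

theorem injOn_fst_of_mem_expansion {n : ℕ} {α : Fin n → ℕ} {𝒜 : Set (Finset (Fin n))}
    {S : Finset (Σ i : Fin n, Fin (α i))} (hS : S ∈ expansion α 𝒜) :
    Set.InjOn Sigma.fst (S : Set (Σ i : Fin n, Fin (α i))) :=
  card_image_iff.mp hS.2.symm

theorem stmt_17_general {n : ℕ} (α : Fin n → ℕ)
    (𝒜 : Set (Finset (Fin n)))
    (A₁ A₂ B₁ B₂ : Finset (Fin n))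
    (hex : SymSubsetExch 𝒜 A₁ A₂ B₁ B₂)
    (A'₁ A'₂ B'₁ B'₂ : Finset (Σ i : Fin n, Fin (α i)))
    (hB'1 : B'₁ ∈ expansion α 𝒜) (hB'2 : B'₂ ∈ expansion α 𝒜)
    (hpA1 : A'₁.image Sigma.fst = A₁) (hpA2 : A'₂.image Sigma.fst = A₂)
    (hpB1 : B'₁.image Sigma.fst = B₁) (hpB2 : B'₂.image Sigma.fst = B₂)
    (hcomp : A'₁ ∪ A'₂ = B'₁ ∪ B'₂) :
    SymSubsetExch (expansion α 𝒜) A'₁ A'₂ B'₁ B'₂ := by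
  have hbase : B₁ ∩ B₂ ⊆ A₁ ∩ A₂ := hex.inter_subset_inter
  subst hpA1 hpA2 hpB1 hpB2
  exact symSubsetExch_of_union_eq_of_inter_subset hB'1 hB'2 hcomp
    (inter_subset_inter_of_image_inter_subset hcomp (injOn_fst_of_mem_expansion hB'1)
      (injOn_fst_of_mem_expansion hB'2) hbase)

/-- if `(B₁, B₂)` is obtained from `(A₁, A₂)` by a symmetric
subset exchange in `M`, and `(A'₁, A'₂)`, `(B'₁, B'₂)` are compatible pairs of
bases of `M^α` projecting to them, then `(B'₁, B'₂)` is obtained from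
`(A'₁, A'₂)` by a symmetric subset exchange in `M^α`. -/
theorem stmt_17 {n : ℕ} (α : Fin n → ℕ) (hα : ∀ i, 0 < α i)
    (𝒜 : Set (Finset (Fin n))) (hM : IsMatroidBases 𝒜)
    (A₁ A₂ B₁ B₂ : Finset (Fin n))
    (hA1 : A₁ ∈ 𝒜) (hA2 : A₂ ∈ 𝒜)
    (hex : SymSubsetExch 𝒜 A₁ A₂ B₁ B₂)
    (A'₁ A'₂ B'₁ B'₂ : Finset (Σ i : Fin n, Fin (α i)))
    (hA'1 : A'₁ ∈ expansion α 𝒜) (hA'2 : A'₂ ∈ expansion α 𝒜)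
    (hB'1 : B'₁ ∈ expansion α 𝒜) (hB'2 : B'₂ ∈ expansion α 𝒜)
    (hpA1 : A'₁.image Sigma.fst = A₁) (hpA2 : A'₂.image Sigma.fst = A₂)
    (hpB1 : B'₁.image Sigma.fst = B₁) (hpB2 : B'₂.image Sigma.fst = B₂)
    (hcomp : A'₁ ∪ A'₂ = B'₁ ∪ B'₂) :
    SymSubsetExch (expansion α 𝒜) A'₁ A'₂ B'₁ B'₂ :=
  stmt_17_general α 𝒜 A₁ A₂ B₁ B₂ hex A'₁ A'₂ B'₁ B'₂ hB'1 hB'2 hpA1 hpA2 hpB1 hpB2 hcomp
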